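/- arXiv:math/0601191 — 4 statements merged into one kernel-verified Lean document; each statement's English description precedes it below -/
import Mathlib

section
/- If R is a dominant region and I_R = {β ∈ Φ⁺ : R ⊆ {v : (v,β) > 1}}, then R equals R_{I_R} = {v ∈ C : (v,β) > 1 for all β ∈ I_R and (v,γ) < 1 for all γ ∈ Φ⁺ \ I_R}. Consequently, the map R ↦ I_R from dominant regions to increasing sets is injective. -/
open RealInnerProductSpace

variable {V : Type*} [NormedAddCommGroup V] [InnerProductSpace ℝ V]

/-- The root order: `β ≤ γ` iff `γ - β` is a nonnegative real combination of simple roots. -/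
def rle {n : ℕ} (α : Fin n → V) (β γ : V) : Prop :=
  ∃ c : Fin n → ℝ, (∀ i, 0 ≤ c i) ∧ γ - β = ∑ i, c i • α i

/-- The open dominant chamber. -/
def chamber {n : ℕ} (α : Fin n → V) : Set V :=
  {v | ∀ i, 0 < ⟪v, α i⟫}

/-- Antichain in the root order: pairwise incomparable. -/
def RootAntichain {n : ℕ} (α : Fin n → V) (Λ : Set V) : Prop :=
  ∀ β ∈ Λ, ∀ γ ∈ Λ, (rle α β γ ∨ rle α γ β) → β = γ

/-- Increasing set (dual order ideal) in the positive root poset. -/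
def IncreasingIn {n : ℕ} (α : Fin n → V) (Φpos I : Set V) : Prop :=
  ∀ β ∈ I, ∀ γ ∈ Φpos, rle α β γ → γ ∈ I

/-- Minimal elements of a set in the root order. -/
def rminimals {n : ℕ} (α : Fin n → V) (I : Set V) : Set V :=
  {β ∈ I | ∀ γ ∈ I, rle α γ β → γ = β}

/-- Maximal elements of a set in the root order. -/
def rmaximals {n : ℕ} (α : Fin n → V) (S : Set V) : Set V :=
  {β ∈ S | ∀ γ ∈ S, rle α β γ → γ = β}

/-- The region `R_I` determined by an increasing set `I`. -/
def regionOf {n : ℕ} (α : Fin n → V) (Φpos I : Set V) : Set V :=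
  {v ∈ chamber α | (∀ β ∈ I, 1 < ⟪v, β⟫) ∧ ∀ γ ∈ Φpos \ I, ⟪v, γ⟫ < 1}

/-- The union of the hyperplanes of the Catalan arrangement. -/
def catHyperplanes (Φpos : Set V) : Set V :=
  ⋃ β ∈ Φpos, {v : V | ⟪v, β⟫ = -1 ∨ ⟪v, β⟫ = 0 ∨ ⟪v, β⟫ = 1}

lemma inner_pos_of_cone {n : ℕ} {α : Fin n → V} {v β : V} (hv : v ∈ chamber α)
    (c : Fin n → ℝ) (hc : ∀ i, 0 ≤ c i) (hβ : β = ∑ i, c i • α i) (hβ0 : β ≠ 0) :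
    0 < ⟪v, β⟫ := by
  have hsum : ⟪v, β⟫ = ∑ i, c i * ⟪v, α i⟫ := by
    rw [hβ, inner_sum]
    exact Finset.sum_congr rfl fun i _ => real_inner_smul_right v (α i) (c i)
  by_contra h
  push_neg at h
  have hnn : ∀ i ∈ Finset.univ, (0:ℝ) ≤ c i * ⟪v, α i⟫ :=
    fun i _ => mul_nonneg (hc i) (hv i).le
  have hz : ∑ i, c i * ⟪v, α i⟫ = 0 :=
    le_antisymm (hsum ▸ h) (Finset.sum_nonneg hnn)
  have hall := (Finset.sum_eq_zero_iff_of_nonneg hnn).mp hz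
  apply hβ0
  rw [hβ]
  apply Finset.sum_eq_zero
  intro i _
  have hci : c i = 0 := by
    rcases mul_eq_zero.mp (hall i (Finset.mem_univ i)) with h' | h'
    · exact h'
    · exact absurd h' (hv i).ne'
  simp [hci]

lemma not_on_hyp {Φpos : Set V} {v : V} (hv : v ∈ (catHyperplanes Φpos)ᶜ)
    {β : V} (hβ : β ∈ Φpos) : ⟪v, β⟫ ≠ -1 ∧ ⟪v, β⟫ ≠ 0 ∧ ⟪v, β⟫ ≠ 1 := by
  simp only [catHyperplanes, Set.mem_compl_iff, Set.mem_iUnion, Set.mem_setOf_eq,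
    not_exists, not_or] at hv
  exact hv β hβ

lemma region_eq {n : ℕ} (α : Fin n → V) (Φpos : Set V)
    (hcone : ∀ β ∈ Φpos, ∃ c : Fin n → ℝ, (∀ i, 0 ≤ c i) ∧ β = ∑ i, c i • α i)
    (h0 : ∀ β ∈ Φpos, β ≠ 0)
    (R : Set V) (x : V) (hx : x ∈ (catHyperplanes Φpos)ᶜ)
    (hR : R = connectedComponentIn (catHyperplanes Φpos)ᶜ x) (hRC : R ⊆ chamber α) :
    R = regionOf α Φpos {β ∈ Φpos | R ⊆ {v : V | 1 < ⟪v, β⟫}} := by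
  set I : Set V := {β ∈ Φpos | R ⊆ {v : V | 1 < ⟪v, β⟫}} with hI
  have hxR : x ∈ R := hR ▸ mem_connectedComponentIn hx
  have hcomp : R ⊆ (catHyperplanes Φpos)ᶜ := hR ▸ connectedComponentIn_subset _ _
  have hconn : IsPreconnected R := hR ▸ isPreconnected_connectedComponentIn
  have hfwd : R ⊆ regionOf α Φpos I := by
    intro v hvR
    refine ⟨hRC hvR, fun β hβ => hβ.2 hvR, ?_⟩
    rintro γ ⟨hγΦ, hγI⟩
    have hns : ¬ R ⊆ {v : V | 1 < ⟪v, γ⟫} := fun h => hγI ⟨hγΦ, h⟩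
    obtain ⟨w, hwR, hw⟩ := Set.not_subset.mp hns
    have hw1 : ⟪w, γ⟫ < 1 :=
      lt_of_le_of_ne (not_lt.mp hw) (not_on_hyp (hcomp hwR) hγΦ).2.2
    have hf : Continuous fun u : V => ⟪u, γ⟫ := continuous_id.inner continuous_const
    have himg : IsPreconnected ((fun u : V => ⟪u, γ⟫) '' R) :=
      hconn.image _ hf.continuousOn
    by_contra h
    have hv1 : 1 < ⟪v, γ⟫ :=
      lt_of_le_of_ne (not_lt.mp h) (Ne.symm (not_on_hyp (hcomp hvR) hγΦ).2.2)
    have hIcc := himg.Icc_subset ⟨w, hwR, rfl⟩ ⟨v, hvR, rfl⟩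
    obtain ⟨u, huR, hu⟩ := hIcc ⟨hw1.le, hv1.le⟩
    exact (not_on_hyp (hcomp huR) hγΦ).2.2 hu
  refine Set.Subset.antisymm hfwd ?_
  have hsub : regionOf α Φpos I ⊆ (catHyperplanes Φpos)ᶜ := by
    rintro v ⟨hvC, hIin, hout⟩
    simp only [catHyperplanes, Set.mem_compl_iff, Set.mem_iUnion, Set.mem_setOf_eq,
      not_exists, not_or]
    intro β hβ
    obtain ⟨c, hc, hβeq⟩ := hcone β hβ
    have hpos := inner_pos_of_cone hvC c hc hβeq (h0 β hβ)
    by_cases hβI : β ∈ I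
    · have := hIin β hβI
      exact ⟨by linarith, by linarith, by linarith⟩
    · have := hout β ⟨hβ, hβI⟩
      exact ⟨by linarith, by linarith, by linarith⟩
  have hchf : ∀ β : V, IsLinearMap ℝ (fun v : V => ⟪v, β⟫) :=
    fun β => ⟨fun x y => inner_add_left x y β, fun c x => real_inner_smul_left x β c⟩
  have hconv : Convex ℝ (regionOf α Φpos I) := by
    have h1 : Convex ℝ (chamber α) := by
      have he : chamber α = ⋂ i, {v : V | 0 < ⟪v, α i⟫} := by
        ext v; simp [chamber]
      rw [he]; exact convex_iInter fun i => convex_halfSpace_gt (hchf (α i)) 0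
    have h2 : Convex ℝ {v : V | ∀ β ∈ I, 1 < ⟪v, β⟫} := by
      have he : {v : V | ∀ β ∈ I, 1 < ⟪v, β⟫} = ⋂ β ∈ I, {v : V | 1 < ⟪v, β⟫} := by
        ext v; simp
      rw [he]; exact convex_iInter₂ fun β _ => convex_halfSpace_gt (hchf β) 1
    have h3 : Convex ℝ {v : V | ∀ γ ∈ Φpos \ I, ⟪v, γ⟫ < 1} := by
      have he : {v : V | ∀ γ ∈ Φpos \ I, ⟪v, γ⟫ < 1}
          = ⋂ γ ∈ Φpos \ I, {v : V | ⟪v, γ⟫ < 1} := by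
        ext v; simp
      rw [he]; exact convex_iInter₂ fun γ _ => convex_halfSpace_lt (hchf γ) 1
    have he : regionOf α Φpos I = chamber α ∩
        ({v : V | ∀ β ∈ I, 1 < ⟪v, β⟫} ∩ {v : V | ∀ γ ∈ Φpos \ I, ⟪v, γ⟫ < 1}) := by
      ext v
      simp only [regionOf, Set.mem_setOf_eq, Set.mem_inter_iff]
    rw [he]; exact h1.inter (h2.inter h3)
  rw [hR]
  exact hconv.isPreconnected.subset_connectedComponentIn (hfwd hxR) hsub

theorem stmt3 {n : ℕ} (α : Fin n → V) (Φpos : Set V)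
    (hcone : ∀ β ∈ Φpos, ∃ c : Fin n → ℝ, (∀ i, 0 ≤ c i) ∧ β = ∑ i, c i • α i)
    (h0 : ∀ β ∈ Φpos, β ≠ 0)
    (R₁ R₂ : Set V)
    (x₁ : V) (hx₁ : x₁ ∈ (catHyperplanes Φpos)ᶜ)
    (hR₁ : R₁ = connectedComponentIn (catHyperplanes Φpos)ᶜ x₁)
    (hRC₁ : R₁ ⊆ chamber α)
    (x₂ : V) (hx₂ : x₂ ∈ (catHyperplanes Φpos)ᶜ)
    (hR₂ : R₂ = connectedComponentIn (catHyperplanes Φpos)ᶜ x₂)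
    (hRC₂ : R₂ ⊆ chamber α) :
    R₁ = regionOf α Φpos {β ∈ Φpos | R₁ ⊆ {v : V | 1 < ⟪v, β⟫}} ∧
    ({β ∈ Φpos | R₁ ⊆ {v : V | 1 < ⟪v, β⟫}} =
        {β ∈ Φpos | R₂ ⊆ {v : V | 1 < ⟪v, β⟫}} → R₁ = R₂) := by
  have e₁ := region_eq α Φpos hcone h0 R₁ x₁ hx₁ hR₁ hRC₁
  have e₂ := region_eq α Φpos hcone h0 R₂ x₂ hx₂ hR₂ hRC₂
  exact ⟨e₁, fun hEq => by rw [e₁, hEq, ← e₂]⟩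
end

section
/- Let β, γ be distinct positive roots in a finite root system Φ. Then {β, γ} is an antichain in the root order on Φ⁺ if and only if there exists a point v in the open dominant chamber C with (v, β) = (v, γ) = 1. -/
open RealInnerProductSpace

variable {V : Type*} [NormedAddCommGroup V] [InnerProductSpace ℝ V]

/-!
Write `β = ∑ bₖ αₖ` and `γ = ∑ cₖ αₖ`. If `{β, γ}` is an antichain, then `b - c` has a positive
and a negative coordinate, so some vector `x` with all coordinates positive is orthogonal to
`b - c`; the point `v` of the chamber with `⟪v, αₖ⟫ = xₖ`, rescaled, pairs to `1` with both roots.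
Conversely, `⟪v, ·⟫` is strictly monotone along the root order for `v ∈ C`, so two roots on the
same level set of it are incomparable.
-/

section PositiveWeights

variable {ι : Type*} [Fintype ι]

lemma exists_pos_sum_mul_eq_zero_of_sum_nonneg {d : ι → ℝ} {j : ι} (hj : d j < 0)
    (hD : 0 ≤ ∑ k, d k) : ∃ x : ι → ℝ, (∀ k, 0 < x k) ∧ ∑ k, d k * x k = 0 := by
  classical
  set t := (∑ k, d k) / -d j
  have ht : 0 ≤ t := div_nonneg hD (neg_nonneg.2 hj.le)
  refine ⟨fun k => 1 + if k = j then t else 0, fun k => ?_, ?_⟩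
  · dsimp only
    split_ifs <;> positivity
  · have hdt : d j * t = -∑ k, d k := by
      rw [mul_div_assoc', mul_comm, mul_div_assoc, div_neg, div_self hj.ne, mul_neg, mul_one]
    simp only [mul_add, mul_one, mul_ite, mul_zero, Finset.sum_add_distrib, Finset.sum_ite_eq',
      Finset.mem_univ, if_true, hdt, add_neg_cancel]

lemma exists_pos_sum_mul_eq_zero {d : ι → ℝ} {i j : ι} (hi : 0 < d i) (hj : d j < 0) :
    ∃ x : ι → ℝ, (∀ k, 0 < x k) ∧ ∑ k, d k * x k = 0 := by
  rcases le_total 0 (∑ k, d k) with hD | hD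
  · exact exists_pos_sum_mul_eq_zero_of_sum_nonneg hj hD
  · obtain ⟨x, hx, hdx⟩ := exists_pos_sum_mul_eq_zero_of_sum_nonneg (d := -d)
      (neg_neg_of_pos hi) (by simpa [Finset.sum_neg_distrib] using hD)
    exact ⟨x, hx, by simpa [neg_mul, Finset.sum_neg_distrib] using hdx⟩

end PositiveWeights

section RootOrder

variable {n : ℕ} (α : Fin n → V)

lemma inner_sum_smul (v : V) (c : Fin n → ℝ) :
    ⟪v, ∑ k, c k • α k⟫ = ∑ k, c k * ⟪v, α k⟫ := by
  simp only [inner_sum, real_inner_smul_right]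

lemma rle_sum_smul_of_le {b c : Fin n → ℝ} (h : ∀ k, b k ≤ c k) :
    rle α (∑ k, b k • α k) (∑ k, c k • α k) :=
  ⟨c - b, fun k => sub_nonneg.2 (h k), by simp only [Pi.sub_apply, sub_smul, Finset.sum_sub_distrib]⟩

variable {α}

lemma eq_of_rle_of_inner_eq {v a b : V} (hv : v ∈ chamber α) (hab : rle α a b)
    (hvab : ⟪v, a⟫ = ⟪v, b⟫) : a = b := by
  obtain ⟨e, he0, heq⟩ := hab
  have hsum : ∑ k, e k * ⟪v, α k⟫ = 0 := by
    rw [← inner_sum_smul, ← heq, inner_sub_right, hvab, sub_self]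
  have he : ∀ k, e k = 0 := fun k =>
    (mul_eq_zero.mp ((Finset.sum_eq_zero_iff_of_nonneg fun k _ =>
      mul_nonneg (he0 k) (hv k).le).mp hsum k (Finset.mem_univ k))).resolve_right (hv k).ne'
  rw [eq_comm, ← sub_eq_zero, heq]
  simp [he]

lemma rootAntichain_pair_iff {β γ : V} (hne : β ≠ γ) :
    RootAntichain α {β, γ} ↔ ¬ rle α β γ ∧ ¬ rle α γ β := by
  constructor
  · intro hA
    have hβγ := fun h => hne (hA β (Set.mem_insert _ _) γ (Set.mem_insert_of_mem _ rfl) h)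
    exact ⟨fun h => hβγ (Or.inl h), fun h => hβγ (Or.inr h)⟩
  · rintro ⟨hβγ, hγβ⟩ a (rfl | rfl) c (rfl | rfl) h <;> tauto

lemma exists_inner_eq (hind : LinearIndependent ℝ α)
    (hspan : Submodule.span ℝ (Set.range α) = ⊤) (x : Fin n → ℝ) :
    ∃ v : V, ∀ i, ⟪v, α i⟫ = x i := by
  let B : Module.Basis (Fin n) ℝ V := Module.Basis.mk hind hspan.ge
  have : FiniteDimensional ℝ V := B.finiteDimensional_of_finite
  let f : V →ₗ[ℝ] ℝ := ∑ i, x i • B.coord i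
  refine ⟨(InnerProductSpace.toDual ℝ V).symm (LinearMap.toContinuousLinearMap f), fun i => ?_⟩
  have hrepr : B.repr (α i) = Finsupp.single i 1 := by
    rw [← Module.Basis.mk_apply hind hspan.ge i]
    exact B.repr_self i
  rw [InnerProductSpace.toDual_symm_apply]
  simp [f, Module.Basis.coord_apply, hrepr, Finsupp.single_apply]

lemma exists_mem_chamber_inner_eq_one (hind : LinearIndependent ℝ α)
    (hspan : Submodule.span ℝ (Set.range α) = ⊤) {b c : Fin n → ℝ} (hb0 : ∀ k, 0 ≤ b k)
    (hc0 : ∀ k, 0 ≤ c k) {i j : Fin n} (hi : c i < b i) (hj : b j < c j) :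
    ∃ v ∈ chamber α, ⟪v, ∑ k, b k • α k⟫ = 1 ∧ ⟪v, ∑ k, c k • α k⟫ = 1 := by
  obtain ⟨x, hx, hdx⟩ := exists_pos_sum_mul_eq_zero (d := b - c) (sub_pos.2 hi) (sub_neg.2 hj)
  set S := ∑ k, b k * x k
  have hS : 0 < S := Finset.sum_pos' (fun k _ => mul_nonneg (hb0 k) (hx k).le)
    ⟨i, Finset.mem_univ i, mul_pos ((hc0 i).trans_lt hi) (hx i)⟩
  have hcS : ∑ k, c k * x k = S := by
    simp only [Pi.sub_apply, sub_mul, Finset.sum_sub_distrib] at hdx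
    linarith
  obtain ⟨v, hv⟩ := exists_inner_eq hind hspan (fun k => x k / S)
  have hpair : ∀ a : Fin n → ℝ, ⟪v, ∑ k, a k • α k⟫ = (∑ k, a k * x k) / S := fun a => by
    simp only [inner_sum_smul, hv, Finset.sum_div, mul_div_assoc]
  refine ⟨v, fun k => ?_, ?_, ?_⟩
  · rw [hv]
    exact div_pos (hx k) hS
  · rw [hpair, div_self hS.ne']
  · rw [hpair, hcS, div_self hS.ne']

end RootOrder

theorem stmt10_general {n : ℕ} (α : Fin n → V)
    (hind : LinearIndependent ℝ α)
    (hspan : Submodule.span ℝ (Set.range α) = ⊤)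
    (Φpos : Set V)
    (hcone : ∀ β ∈ Φpos, ∃ c : Fin n → ℝ, (∀ i, 0 ≤ c i) ∧ β = ∑ i, c i • α i)
    (β γ : V) (hβ : β ∈ Φpos) (hγ : γ ∈ Φpos) (hne : β ≠ γ) :
    RootAntichain α {β, γ} ↔
      ∃ v ∈ chamber α, ⟪v, β⟫ = 1 ∧ ⟪v, γ⟫ = 1 := by
  rw [rootAntichain_pair_iff hne]
  constructor
  · rintro ⟨hβγ, hγβ⟩
    obtain ⟨b, hb0, rfl⟩ := hcone β hβ
    obtain ⟨c, hc0, rfl⟩ := hcone γ hγ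
    obtain ⟨i, hi⟩ : ∃ i, c i < b i := by
      by_contra! h
      exact hβγ (rle_sum_smul_of_le α h)
    obtain ⟨j, hj⟩ : ∃ j, b j < c j := by
      by_contra! h
      exact hγβ (rle_sum_smul_of_le α h)
    exact exists_mem_chamber_inner_eq_one hind hspan hb0 hc0 hi hj
  · rintro ⟨v, hv, hvβ, hvγ⟩
    exact ⟨fun h => hne (eq_of_rle_of_inner_eq hv h (hvβ.trans hvγ.symm)),
      fun h => hne (eq_of_rle_of_inner_eq hv h (hvγ.trans hvβ.symm)).symm⟩

theorem stmt10 [FiniteDimensional ℝ V] {n : ℕ} (α : Fin n → V)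
    (hind : LinearIndependent ℝ α)
    (hspan : Submodule.span ℝ (Set.range α) = ⊤)
    (Φpos : Set V)
    (hcone : ∀ β ∈ Φpos, ∃ c : Fin n → ℝ, (∀ i, 0 ≤ c i) ∧ β = ∑ i, c i • α i)
    (h0 : ∀ β ∈ Φpos, β ≠ 0)
    (β γ : V) (hβ : β ∈ Φpos) (hγ : γ ∈ Φpos) (hne : β ≠ γ) :
    RootAntichain α {β, γ} ↔
      ∃ v ∈ chamber α, ⟪v, β⟫ = 1 ∧ ⟪v, γ⟫ = 1 :=
  stmt10_general α hind hspan Φpos hcone β γ hβ hγ hne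
end

section
/- Let Λ be a linearly independent set of at least two positive roots, fix γ ∈ Λ, and let Λ_γ = Λ \ {γ}. For each connected component A of V \ ⋃_{β∈Λ_γ} H_{β,1}, choose a point v_A ∈ A ∩ H_{γ,1}. Then the intersection of Int(Λ) = ⋂_{β∈Λ} H_{β,1} with the convex hull of the points {v_A} is nonempty. -/
open RealInnerProductSpace

variable {V : Type*} [NormedAddCommGroup V] [InnerProductSpace ℝ V]

/-- Complement of the union of the affine hyperplanes `(v, β) = 1`, `β ∈ Λ`. -/
def hyperU (Λ : Finset V) : Set V :=
  (⋃ β ∈ Λ, {v : V | ⟪v, β⟫ = 1})ᶜ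

/-- The open sign chamber of the arrangement `{H_{β,1}}` determined by signs `s`. -/
def signChamber (Λ : Finset V) (s : V → Bool) : Set V :=
  ⋂ β ∈ Λ, if s β then {v : V | 1 < ⟪v, β⟫} else {v : V | ⟪v, β⟫ < 1}
/-!
Every sign chamber of the arrangement `{H_{β,1}}_{β ∈ Λ_γ}` is nonempty by linear independence,
and a connected component of the complement lies inside a single chamber, so the points `v_A`
meet every chamber. Induct on the arrangement: removing one hyperplane `H_{a,1}`, the two points
in the chambers that differ only in the sign at `a` span a segment that crosses `H_{a,1}` inside
the remaining (convex) chamber. Hence the points of `conv {v_A} ∩ H_{a,1}` again meet every chamber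
of the smaller arrangement. Finally all `v_A` lie on `H_{γ,1}`, hence so does their hull.
-/

theorem exists_forall_inner_eq {ι : Type*} [Finite ι] {f : ι → V}
    (hf : LinearIndependent ℝ f) (c : ι → ℝ) : ∃ x : V, ∀ i, ⟪x, f i⟫ = c i := by
  let W := Submodule.span ℝ (Set.range f)
  have : FiniteDimensional ℝ W := FiniteDimensional.span_of_finite ℝ (Set.finite_range f)
  let b := Module.Basis.span hf
  let φ := LinearMap.toContinuousLinearMap (b.constr ℝ c)
  refine ⟨(InnerProductSpace.toDual ℝ W).symm φ, fun i => ?_⟩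
  have h := InnerProductSpace.toDual_symm_apply (𝕜 := ℝ) (x := b i) (y := φ)
  rw [Submodule.coe_inner, Module.Basis.coe_span_apply] at h
  rw [h]
  exact b.constr_basis ℝ c i

theorem isLinearMap_inner_left (b : V) : IsLinearMap ℝ (fun v : V => ⟪v, b⟫) :=
  ⟨fun x y => inner_add_left x y b, fun c x => real_inner_smul_left x b c⟩

theorem mem_signChamber {T : Finset V} {s : V → Bool} {v : V} :
    v ∈ signChamber T s ↔ ∀ β ∈ T, if s β then 1 < ⟪v, β⟫ else ⟪v, β⟫ < 1 := by
  simp only [signChamber, Set.mem_iInter]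
  refine forall₂_congr fun β _ => ?_
  split <;> rfl

theorem signChamber_nonempty {T : Finset V} (hT : LinearIndepOn ℝ id (T : Set V))
    (s : V → Bool) : (signChamber T s).Nonempty := by
  obtain ⟨x, hx⟩ := exists_forall_inner_eq hT fun β => if s β then 2 else 0
  refine ⟨x, mem_signChamber.2 fun β hβ => ?_⟩
  have := hx ⟨β, hβ⟩
  simp only [id] at this
  split_ifs at this ⊢ <;> linarith

theorem convex_signChamber (T : Finset V) (s : V → Bool) : Convex ℝ (signChamber T s) :=
  convex_iInter₂ fun β _ => by
    split
    · exact convex_halfSpace_gt (isLinearMap_inner_left β) 1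
    · exact convex_halfSpace_lt (isLinearMap_inner_left β) 1

theorem signChamber_subset_hyperU (T : Finset V) (s : V → Bool) :
    signChamber T s ⊆ hyperU T := by
  intro v hv hvU
  obtain ⟨β, hβ, hvβ : ⟪v, β⟫ = 1⟩ := Set.mem_iUnion₂.1 hvU
  have := mem_signChamber.1 hv β hβ
  split_ifs at this <;> linarith

theorem signChamber_insert_update [DecidableEq V] {T : Finset V} {a : V} (ha : a ∉ T)
    (s : V → Bool) (t : Bool) :
    signChamber (insert a T) (Function.update s a t) =
      (if t then {v : V | 1 < ⟪v, a⟫} else {v : V | ⟪v, a⟫ < 1}) ∩ signChamber T s := by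
  rw [signChamber, Finset.set_biInter_insert, Function.update_self, signChamber]
  congr 1
  refine Set.iInter₂_congr fun β hβ => ?_
  rw [Function.update_of_ne (ne_of_mem_of_not_mem hβ ha)]

theorem IsPreconnected.one_lt_inner_iff {A : Set V} (hA : IsPreconnected A) {b : V}
    (hAb : ∀ y ∈ A, ⟪y, b⟫ ≠ 1) {x y : V} (hx : x ∈ A) (hy : y ∈ A) :
    1 < ⟪x, b⟫ ↔ 1 < ⟪y, b⟫ := by
  have hcont : ContinuousOn (fun v : V => ⟪v, b⟫) A :=
    (continuous_id.inner continuous_const).continuousOn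
  have key : ∀ x ∈ A, ∀ y ∈ A, 1 < ⟪x, b⟫ → 1 < ⟪y, b⟫ := by
    intro x hx y hy hxb
    by_contra! hyb
    obtain ⟨z, hz, hzb⟩ := hA.intermediate_value hy hx hcont ⟨hyb, hxb.le⟩
    exact hAb z hz hzb
  exact ⟨key x hx y hy, key y hy x hx⟩

theorem IsPreconnected.subset_signChamber {A : Set V} (hA : IsPreconnected A) {T : Finset V}
    (hAT : A ⊆ hyperU T) {s : V → Bool} {x : V} (hx : x ∈ A) (hxs : x ∈ signChamber T s) :
    A ⊆ signChamber T s := by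
  intro y hy
  refine mem_signChamber.2 fun β hβ => ?_
  have hAβ : ∀ z ∈ A, ⟪z, β⟫ ≠ 1 := fun z hz hzβ => hAT hz (Set.mem_biUnion hβ hzβ)
  have hxy := hA.one_lt_inner_iff hAβ hx hy
  have hxβ := mem_signChamber.1 hxs β hβ
  split_ifs at hxβ ⊢ with hsβ
  · exact hxy.1 hxβ
  · exact lt_of_le_of_ne (not_lt.1 fun h => hxβ.not_gt (hxy.2 h)) (hAβ y hy)

theorem connectedComponentIn_hyperU_subset_signChamber {T : Finset V} {s : V → Bool} {x : V}
    (hx : x ∈ signChamber T s) : connectedComponentIn (hyperU T) x ⊆ signChamber T s :=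
  isPreconnected_connectedComponentIn.subset_signChamber (connectedComponentIn_subset _ x)
    (mem_connectedComponentIn (signChamber_subset_hyperU T s hx)) hx

theorem exists_mem_segment_inner_eq {p q b : V} (hp : 1 < ⟪p, b⟫) (hq : ⟪q, b⟫ < 1) :
    ∃ z ∈ segment ℝ p q, ⟪z, b⟫ = 1 := by
  by_contra! h
  have := ((convex_segment p q).isPreconnected.one_lt_inner_iff h
    (left_mem_segment ℝ p q) (right_mem_segment ℝ p q)).1 hp
  linarith

theorem nonempty_inter_convexHull_of_forall_signChamber [DecidableEq V] (T : Finset V)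
    {S : Set V} (hS : ∀ s : V → Bool, (S ∩ signChamber T s).Nonempty) :
    ({v : V | ∀ β ∈ T, ⟪v, β⟫ = 1} ∩ convexHull ℝ S).Nonempty := by
  induction T using Finset.induction_on generalizing S with
  | empty =>
    obtain ⟨p, hp, -⟩ := hS fun _ => true
    exact ⟨p, fun β hβ => absurd hβ (Finset.notMem_empty β), subset_convexHull ℝ S hp⟩
  | @insert a T ha ih =>
    let Ha : Set V := {v | ⟪v, a⟫ = 1}
    have hS' : ∀ s : V → Bool, (convexHull ℝ S ∩ Ha ∩ signChamber T s).Nonempty := by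
      intro s
      obtain ⟨p, hpS, hp⟩ := hS (Function.update s a true)
      obtain ⟨q, hqS, hq⟩ := hS (Function.update s a false)
      rw [signChamber_insert_update ha] at hp hq
      obtain ⟨z, hz, hza⟩ := exists_mem_segment_inner_eq hp.1 hq.1
      refine ⟨z, ⟨?_, hza⟩, (convex_signChamber T s).segment_subset hp.2 hq.2 hz⟩
      exact (convex_convexHull ℝ S).segment_subset (subset_convexHull ℝ S hpS)
        (subset_convexHull ℝ S hqS) hz
    obtain ⟨v, hvT, hv⟩ := ih hS'
    have hv' : v ∈ convexHull ℝ S ∩ Ha :=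
      convexHull_min subset_rfl
        ((convex_convexHull ℝ S).inter (convex_hyperplane (isLinearMap_inner_left a) 1)) hv
    refine ⟨v, fun β hβ => ?_, hv'.1⟩
    rcases Finset.mem_insert.1 hβ with rfl | hβT
    exacts [hv'.2, hvT β hβT]

theorem stmt15_general [DecidableEq V] (Λ : Finset V)
    (hind : LinearIndependent ℝ (fun x : (Λ : Set V) => (x : V)))
    (γ : V) (vA : Set V → V)
    (hvA : ∀ A : Set V,
      (∃ x ∈ hyperU (Λ.erase γ), A = connectedComponentIn (hyperU (Λ.erase γ)) x) →
      vA A ∈ A ∧ ⟪vA A, γ⟫ = 1) :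
    Set.Nonempty ({v : V | ∀ β ∈ Λ, ⟪v, β⟫ = 1} ∩
      convexHull ℝ (vA ''
        {A : Set V | ∃ x ∈ hyperU (Λ.erase γ),
          A = connectedComponentIn (hyperU (Λ.erase γ)) x})) := by
  set T := Λ.erase γ
  set S := vA '' {A : Set V | ∃ x ∈ hyperU T, A = connectedComponentIn (hyperU T) x}
  have hT : LinearIndepOn ℝ id (T : Set V) := LinearIndepOn.mono (v := id) hind (by simp [T])
  obtain ⟨v, hvT, hv⟩ := nonempty_inter_convexHull_of_forall_signChamber T (S := S) fun s => by
    obtain ⟨x, hx⟩ := signChamber_nonempty hT s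
    have hA : ∃ y ∈ hyperU T, connectedComponentIn (hyperU T) x = connectedComponentIn _ y :=
      ⟨x, signChamber_subset_hyperU T s hx, rfl⟩
    exact ⟨vA _, ⟨_, hA, rfl⟩, connectedComponentIn_hyperU_subset_signChamber hx (hvA _ hA).1⟩
  have hvγ : ⟪v, γ⟫ = 1 := by
    refine convexHull_min ?_ (convex_hyperplane (isLinearMap_inner_left γ) 1) hv
    rintro _ ⟨A, hA, rfl⟩
    exact (hvA A hA).2
  refine ⟨v, fun β hβ => ?_, hv⟩
  rcases eq_or_ne β γ with rfl | hne
  exacts [hvγ, hvT β (Finset.mem_erase.2 ⟨hne, hβ⟩)]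

theorem stmt15 [DecidableEq V] (Λ : Finset V) (hcard : 2 ≤ Λ.card)
    (hind : LinearIndependent ℝ (fun x : (Λ : Set V) => (x : V)))
    (γ : V) (hγ : γ ∈ Λ) (vA : Set V → V)
    (hvA : ∀ A : Set V,
      (∃ x ∈ hyperU (Λ.erase γ), A = connectedComponentIn (hyperU (Λ.erase γ)) x) →
      vA A ∈ A ∧ ⟪vA A, γ⟫ = 1) :
    Set.Nonempty ({v : V | ∀ β ∈ Λ, ⟪v, β⟫ = 1} ∩
      convexHull ℝ (vA ''
        {A : Set V | ∃ x ∈ hyperU (Λ.erase γ),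
          A = connectedComponentIn (hyperU (Λ.erase γ)) x})) :=
  stmt15_general Λ hind γ vA hvA
end

section
/- Let Λ be an antichain in (Φ⁺, ≤) with at least two elements and γ ∈ Λ. If Int_C(Λ) = ∅ but Int_C(Λ\{γ}) ≠ ∅, then there is a sign assignment (n_β)_{β∈Λ\{γ}} such that the nonempty set B = C ∩ ⋂_{β∈Λ\{γ}} H^{n_β}_{β,1} is disjoint from the hyperplane H_{γ,1}. -/
open RealInnerProductSpace

variable {V : Type*} [NormedAddCommGroup V] [InnerProductSpace ℝ V]

/-!
Let `L` be the affine subspace `⟪v, β⟫ = 1` (`β ∈ Λ \ {γ}`); it meets the open convex chamber `C`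
at some `v₀`, but `C ∩ L ∩ H_γ = ∅`. Separating `C` from `L ∩ H_γ` by Hahn–Banach (or, when
`L ∩ H_γ = ∅`, writing `γ` as a combination of `Λ \ {γ}`) gives coefficients `c_β` with
`∑ c_β (⟪w, β⟫ - 1) < 0` on `C ∩ H_γ`. The separating vector lies in the span of `Λ`, which is the
range of the frame operator `d ↦ ∑ ⟪β, d⟫ β`, so we may take `c_β = ⟪β, d⟫`. Then `v₀ + t d`,
perturbed off all the hyperplanes `H_β`, is a point `w₀ ∈ C` lying on the side of each `H_β`
given by the sign of `c_β`; on the sign chamber of `w₀` every summand is `≥ 0`, so it misses `H_γ`.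
-/

open Filter Topology

noncomputable def frameOperator (S : Finset V) : V →ₗ[ℝ] V :=
  ∑ β ∈ S, (innerₛₗ ℝ β).smulRight β

lemma frameOperator_apply (S : Finset V) (d : V) :
    frameOperator S d = ∑ β ∈ S, ⟪β, d⟫ • β := by
  simp [frameOperator]

lemma inner_frameOperator (S : Finset V) (x d : V) :
    ⟪x, frameOperator S d⟫ = ∑ β ∈ S, ⟪β, d⟫ * ⟪x, β⟫ := by
  simp only [frameOperator_apply, inner_sum, real_inner_smul_right]

lemma mem_orthogonal_range_frameOperator {S : Finset V} {x : V} :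
    x ∈ (LinearMap.range (frameOperator S))ᗮ ↔ ∀ β ∈ S, ⟪β, x⟫ = 0 := by
  rw [Submodule.mem_orthogonal]
  constructor
  · intro hx
    have hsq : ∑ β ∈ S, ⟪β, x⟫ ^ 2 = 0 := by
      simpa [inner_frameOperator, real_inner_comm x, sq] using hx _ ⟨x, rfl⟩
    intro β hβ
    exact pow_eq_zero_iff two_ne_zero |>.mp
      ((Finset.sum_eq_zero_iff_of_nonneg fun β _ => sq_nonneg _).mp hsq β hβ)
  · rintro hx _ ⟨d, rfl⟩
    rw [real_inner_comm, inner_frameOperator]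
    exact Finset.sum_eq_zero fun β hβ => by rw [real_inner_comm β x, hx β hβ, mul_zero]

lemma exists_mem_orthogonal_forall_inner_sub_neg [CompleteSpace V] {C : Set V} (hCo : IsOpen C)
    (hCc : Convex ℝ C) (K : Submodule ℝ V) (p : V) (hC : ∀ w ∈ C, w - p ∉ K) :
    ∃ z ∈ Kᗮ, ∀ w ∈ C, ⟪w - p, z⟫ < 0 := by
  let L : AffineSubspace ℝ V := AffineSubspace.mk' p K
  have hdisj : Disjoint C L := Set.disjoint_left.mpr fun w hwC hwL =>
    hC w hwC (AffineSubspace.mem_mk'.mp hwL)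
  obtain ⟨f, u, hfC, hfL⟩ := geometric_hahn_banach_open hCc hCo L.convex hdisj
  have hpL : p ∈ L := AffineSubspace.self_mem_mk' p K
  -- `f` is bounded below on the affine subspace `L`, so it vanishes on its direction.
  have hfK : ∀ k ∈ K, f k = 0 := by
    intro k hk
    by_contra hfk
    have hmem : p + ((u - 1 - f p) / f k) • k ∈ L :=
      AffineSubspace.mem_mk'.mpr (by simpa using K.smul_mem _ hk)
    have := hfL _ hmem
    rw [map_add, map_smul, smul_eq_mul, div_mul_cancel₀ _ hfk] at this
    linarith
  refine ⟨(InnerProductSpace.toDual ℝ V).symm f, ?_, fun w hwC => ?_⟩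
  · rw [Submodule.mem_orthogonal]
    intro k hk
    rw [real_inner_comm, InnerProductSpace.toDual_symm_apply, hfK k hk]
  · rw [real_inner_comm, InnerProductSpace.toDual_symm_apply, map_sub]
    linarith [hfC w hwC, hfL p hpL]

lemma mem_range_frameOperator_iff [FiniteDimensional ℝ V] {S : Finset V} {z : V} :
    z ∈ LinearMap.range (frameOperator S) ↔ ∀ x : V, (∀ β ∈ S, ⟪β, x⟫ = 0) → ⟪z, x⟫ = 0 := by
  rw [← Submodule.orthogonal_orthogonal (LinearMap.range _), Submodule.mem_orthogonal']
  exact forall_congr' fun x => by rw [mem_orthogonal_range_frameOperator]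

lemma exists_sum_neg_on_hyperplane_of_consistent [FiniteDimensional ℝ V] {C : Set V}
    (hCo : IsOpen C) (hCc : Convex ℝ C) (S : Finset V) {γ p : V} (hpγ : ⟪p, γ⟫ = 1)
    (hpS : ∀ β ∈ S, ⟪p, β⟫ = 1) (hC : ∀ w ∈ C, ⟪w, γ⟫ = 1 → ∃ β ∈ S, ⟪w, β⟫ ≠ 1) :
    ∃ d : V, ∀ w ∈ C, ⟪w, γ⟫ = 1 → ∑ β ∈ S, ⟪β, d⟫ * (⟪w, β⟫ - 1) < 0 := by
  classical
  have hCp : ∀ w ∈ C, w - p ∉ (LinearMap.range (frameOperator (insert γ S)))ᗮ := by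
    intro w hwC hw
    rw [mem_orthogonal_range_frameOperator] at hw
    have hw' : ∀ β ∈ insert γ S, ⟪w, β⟫ = ⟪p, β⟫ := fun β hβ => by
      rw [← sub_eq_zero, ← inner_sub_left, real_inner_comm, hw β hβ]
    obtain ⟨β, hβ, hne⟩ := hC w hwC (by rw [hw' γ (Finset.mem_insert_self γ S), hpγ])
    exact hne (by rw [hw' β (Finset.mem_insert_of_mem hβ), hpS β hβ])
  obtain ⟨z, hz, hneg⟩ := exists_mem_orthogonal_forall_inner_sub_neg hCo hCc _ p hCp
  rw [Submodule.orthogonal_orthogonal] at hz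
  obtain ⟨d, rfl⟩ := hz
  refine ⟨d, fun w hwC hwγ => ?_⟩
  have hwγp : ⟪w - p, γ⟫ = 0 := by rw [inner_sub_left, hwγ, hpγ, sub_self]
  calc ∑ β ∈ S, ⟪β, d⟫ * (⟪w, β⟫ - 1)
      = ∑ β ∈ insert γ S, ⟪β, d⟫ * ⟪w - p, β⟫ := by
        rw [Finset.sum_insert_of_eq_zero_if_notMem fun _ => by rw [hwγp, mul_zero]]
        exact Finset.sum_congr rfl fun β hβ => by rw [inner_sub_left, hpS β hβ]
    _ < 0 := by rw [← inner_frameOperator]; exact hneg w hwC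

lemma exists_sum_neg_on_hyperplane_of_inconsistent [FiniteDimensional ℝ V] (S : Finset V)
    {γ v₀ : V} (hv₀ : ∀ β ∈ S, ⟪v₀, β⟫ = 1) (h : ∀ w, ⟪w, γ⟫ = 1 → ∃ β ∈ S, ⟪w, β⟫ ≠ 1) :
    ∃ d : V, ∀ w, ⟪w, γ⟫ = 1 → ∑ β ∈ S, ⟪β, d⟫ * (⟪w, β⟫ - 1) < 0 := by
  have hγ : γ ∈ LinearMap.range (frameOperator S) := by
    refine mem_range_frameOperator_iff.mpr fun x hx => ?_
    by_contra hxγ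
    obtain ⟨β, hβ, hne⟩ := h (v₀ + ((1 - ⟪v₀, γ⟫) / ⟪γ, x⟫) • x) (by
      rw [inner_add_left, real_inner_smul_left, real_inner_comm γ x]
      field_simp
      ring)
    apply hne
    rw [inner_add_left, real_inner_smul_left, hv₀ β hβ, real_inner_comm β x, hx β hβ, mul_zero,
      add_zero]
  obtain ⟨d₁, hd₁⟩ := hγ
  have hv₀γ : ⟪v₀, γ⟫ ≠ 1 := fun hv₀γ => by
    obtain ⟨β, hβ, hne⟩ := h v₀ hv₀γ
    exact hne (hv₀ β hβ)
  refine ⟨(⟪v₀, γ⟫ - 1) • d₁, fun w hwγ => ?_⟩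
  have hd₁w : ∑ β ∈ S, ⟪β, d₁⟫ * (⟪w, β⟫ - 1) = 1 - ⟪v₀, γ⟫ := by
    calc ∑ β ∈ S, ⟪β, d₁⟫ * (⟪w, β⟫ - 1) = ⟪w - v₀, frameOperator S d₁⟫ := by
          rw [inner_frameOperator]
          exact Finset.sum_congr rfl fun β hβ => by rw [inner_sub_left, hv₀ β hβ]
      _ = 1 - ⟪v₀, γ⟫ := by rw [hd₁, inner_sub_left, hwγ]
  simp only [real_inner_smul_right, mul_assoc, ← Finset.mul_sum, hd₁w]
  nlinarith [sq_pos_of_ne_zero (sub_ne_zero.mpr hv₀γ)]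

lemma exists_sum_neg_on_hyperplane [FiniteDimensional ℝ V] {C : Set V} (hCo : IsOpen C)
    (hCc : Convex ℝ C) (S : Finset V) (γ v₀ : V) (hv₀ : ∀ β ∈ S, ⟪v₀, β⟫ = 1)
    (hC : ∀ w ∈ C, ⟪w, γ⟫ = 1 → ∃ β ∈ S, ⟪w, β⟫ ≠ 1) :
    ∃ d : V, ∀ w ∈ C, ⟪w, γ⟫ = 1 → ∑ β ∈ S, ⟪β, d⟫ * (⟪w, β⟫ - 1) < 0 := by
  by_cases hp : ∃ p, ⟪p, γ⟫ = 1 ∧ ∀ β ∈ S, ⟪p, β⟫ = 1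
  · obtain ⟨p, hpγ, hpS⟩ := hp
    exact exists_sum_neg_on_hyperplane_of_consistent hCo hCc S hpγ hpS hC
  · push Not at hp
    obtain ⟨d, hd⟩ := exists_sum_neg_on_hyperplane_of_inconsistent S hv₀ hp
    exact ⟨d, fun w _ => hd w⟩

lemma dense_compl_setOf_inner_eq {β : V} (hβ : β ≠ 0) (c : ℝ) :
    Dense {w : V | ⟪w, β⟫ = c}ᶜ := by
  rw [← interior_eq_empty_iff_dense_compl, Set.eq_empty_iff_forall_notMem]
  intro w hw
  have hline : Tendsto (fun t : ℝ => w + t • β) (𝓝[≠] 0) (𝓝 w) :=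
    tendsto_nhdsWithin_of_tendsto_nhds <|
      (by fun_prop : Continuous fun t : ℝ => w + t • β).tendsto' 0 w (by simp)
  obtain ⟨t, ht, ht0⟩ :=
    ((hline.eventually (mem_interior_iff_mem_nhds.mp hw)).and self_mem_nhdsWithin).exists
  have hwc : ⟪w, β⟫ = c := (interior_subset hw : w ∈ {w : V | ⟪w, β⟫ = c})
  have : t * ⟪β, β⟫ = 0 := by
    simpa [inner_add_left, real_inner_smul_left, hwc] using ht
  exact (mul_ne_zero ht0 (inner_self_ne_zero.mpr hβ)) this

lemma dense_hyperU [CompleteSpace V] {S : Finset V} (hS : ∀ β ∈ S, β ≠ 0) :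
    Dense (hyperU S) := by
  rw [hyperU, Set.compl_iUnion₂]
  exact dense_biInter_of_isOpen (S := (S : Set V))
    (fun β _ => (isClosed_eq (continuous_id.inner continuous_const) continuous_const).isOpen_compl)
    S.countable_toSet fun β hβ => dense_compl_setOf_inner_eq (hS β hβ) 1

lemma exists_mem_hyperU_sign_compatible [CompleteSpace V] {C : Set V} (hCo : IsOpen C)
    {S : Finset V} {v₀ : V} (hv₀C : v₀ ∈ C) (hv₀ : ∀ β ∈ S, ⟪v₀, β⟫ = 1) (d : V) :
    ∃ w ∈ C ∩ hyperU S, ∀ β ∈ S, 0 ≤ ⟪β, d⟫ * (⟪w, β⟫ - 1) := by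
  classical
  set O : Set V := C ∩ ⋂ β ∈ S.filter (fun β => ⟪β, d⟫ ≠ 0),
    {w : V | 0 < ⟪β, d⟫ * (⟪w, β⟫ - 1)}
  have hO : IsOpen O := hCo.inter <| isOpen_biInter_finset fun β _ =>
    isOpen_lt continuous_const (by fun_prop)
  have hOne : O.Nonempty := by
    have hline : Tendsto (fun t : ℝ => v₀ + t • d) (𝓝[>] 0) (𝓝 v₀) :=
      tendsto_nhdsWithin_of_tendsto_nhds <|
        (by fun_prop : Continuous fun t : ℝ => v₀ + t • d).tendsto' 0 v₀ (by simp)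
    obtain ⟨t, htC, ht⟩ := ((hline.eventually (hCo.mem_nhds hv₀C)).and self_mem_nhdsWithin).exists
    refine ⟨v₀ + t • d, htC, Set.mem_iInter₂.mpr fun β hβ => ?_⟩
    rw [Finset.mem_filter] at hβ
    change 0 < ⟪β, d⟫ * (⟪v₀ + t • d, β⟫ - 1)
    rw [inner_add_left, real_inner_smul_left, hv₀ β hβ.1, real_inner_comm β d, add_sub_cancel_left,
      mul_left_comm]
    exact mul_pos (Set.mem_Ioi.mp ht) (mul_self_pos.mpr hβ.2)
  have hS : ∀ β ∈ S, β ≠ 0 := fun β hβ h => by simpa [h] using hv₀ β hβ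
  obtain ⟨w, ⟨hwC, hwO⟩, hwU⟩ := (dense_hyperU hS).inter_open_nonempty O hO hOne
  refine ⟨w, ⟨hwC, hwU⟩, fun β hβ => ?_⟩
  by_cases hd : ⟪β, d⟫ = 0
  · rw [hd, zero_mul]
  · exact (Set.mem_iInter₂.mp hwO β (Finset.mem_filter.mpr ⟨hβ, hd⟩)).le

noncomputable def signsAt (w : V) : V → Bool := fun β => decide (1 < ⟪w, β⟫)

lemma mem_hyperU_iff {S : Finset V} {w : V} : w ∈ hyperU S ↔ ∀ β ∈ S, ⟪w, β⟫ ≠ 1 := by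
  simp [hyperU]

lemma mem_signChamber_iff {S : Finset V} {s : V → Bool} {w : V} :
    w ∈ signChamber S s ↔ ∀ β ∈ S, if s β then 1 < ⟪w, β⟫ else ⟪w, β⟫ < 1 := by
  simp only [signChamber, Set.mem_iInter₂]
  exact forall₂_congr fun β _ => by split_ifs <;> rfl

lemma mem_signChamber_signsAt {S : Finset V} {w : V} (hw : w ∈ hyperU S) :
    w ∈ signChamber S (signsAt w) := by
  rw [mem_hyperU_iff] at hw
  refine mem_signChamber_iff.mpr fun β hβ => ?_
  by_cases h : 1 < ⟪w, β⟫
  · simp [signsAt, h]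
  · simpa [signsAt, h] using lt_of_le_of_ne (not_lt.mp h) (hw β hβ)

lemma mul_sub_one_pos_of_mem_signChamber_signsAt {S : Finset V} {w₀ w : V}
    (hw₀ : w₀ ∈ hyperU S) (hw : w ∈ signChamber S (signsAt w₀)) {β : V} (hβ : β ∈ S) :
    0 < (⟪w₀, β⟫ - 1) * (⟪w, β⟫ - 1) := by
  have hwβ := mem_signChamber_iff.mp hw β hβ
  by_cases h : 1 < ⟪w₀, β⟫
  · simp only [signsAt, h, decide_true, if_true] at hwβ
    exact mul_pos (sub_pos.mpr h) (sub_pos.mpr hwβ)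
  · simp only [signsAt, h, decide_false, Bool.false_eq_true, if_false] at hwβ
    have h' : ⟪w₀, β⟫ < 1 := lt_of_le_of_ne (not_lt.mp h) (mem_hyperU_iff.mp hw₀ β hβ)
    exact mul_pos_of_neg_of_neg (sub_neg.mpr h') (sub_neg.mpr hwβ)

lemma chamber_isOpen {n : ℕ} (α : Fin n → V) : IsOpen (chamber α) := by
  rw [chamber, Set.ofPred_forall]
  exact isOpen_iInter_of_finite fun i => isOpen_lt continuous_const (by fun_prop)

lemma chamber_convex {n : ℕ} (α : Fin n → V) : Convex ℝ (chamber α) := by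
  rw [chamber, Set.ofPred_forall]
  exact convex_iInter fun i => convex_halfSpace_gt
    ⟨fun x y => inner_add_left x y (α i), fun c x => real_inner_smul_left x (α i) c⟩ 0

theorem stmt16_general [DecidableEq V]
    [FiniteDimensional ℝ V] {n : ℕ} (α : Fin n → V)
    (Λ : Finset V) (γ : V)
    (hempty : ¬ ∃ v ∈ chamber α, ∀ β ∈ Λ, ⟪v, β⟫ = 1)
    (hsub : ∃ v ∈ chamber α, ∀ β ∈ Λ.erase γ, ⟪v, β⟫ = 1) :
    ∃ s : V → Bool,
      (chamber α ∩ signChamber (Λ.erase γ) s).Nonempty ∧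
      (chamber α ∩ signChamber (Λ.erase γ) s) ∩ {v : V | ⟪v, γ⟫ = 1} = ∅ := by
  obtain ⟨v₀, hv₀C, hv₀⟩ := hsub
  have hC : ∀ w ∈ chamber α, ⟪w, γ⟫ = 1 → ∃ β ∈ Λ.erase γ, ⟪w, β⟫ ≠ 1 := by
    intro w hwC hwγ
    by_contra! h
    refine hempty ⟨w, hwC, fun β hβ => ?_⟩
    rcases eq_or_ne β γ with rfl | hβγ
    · exact hwγ
    · exact h β (Finset.mem_erase.mpr ⟨hβγ, hβ⟩)
  obtain ⟨d, hd⟩ :=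
    exists_sum_neg_on_hyperplane (chamber_isOpen α) (chamber_convex α) _ γ v₀ hv₀ hC
  obtain ⟨w₀, ⟨hw₀C, hw₀U⟩, hw₀d⟩ :=
    exists_mem_hyperU_sign_compatible (chamber_isOpen α) hv₀C hv₀ d
  refine ⟨signsAt w₀, ⟨w₀, hw₀C, mem_signChamber_signsAt hw₀U⟩, ?_⟩
  rw [Set.eq_empty_iff_forall_notMem]
  rintro w ⟨⟨hwC, hwS⟩, hwγ⟩
  refine (hd w hwC hwγ).not_ge (Finset.sum_nonneg fun β hβ => ?_)
  have hside := mul_sub_one_pos_of_mem_signChamber_signsAt hw₀U hwS hβ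
  nlinarith [mul_nonneg (hw₀d β hβ) (sq_nonneg (⟪w, β⟫ - 1))]

theorem stmt16 [DecidableEq V]
    [FiniteDimensional ℝ V] {n : ℕ} (α : Fin n → V) (Φ Φpos : Finset V)
    (hind : LinearIndependent ℝ α)
    (hspan : Submodule.span ℝ (Set.range α) = ⊤)
    (hαΦ : ∀ i, α i ∈ Φ)
    (h0 : (0 : V) ∉ Φ)
    (hrefl : ∀ β ∈ Φ, ∀ γ ∈ Φ, γ - (2 * ⟪γ, β⟫ / ⟪β, β⟫) • β ∈ Φ)
    (hmul : ∀ β ∈ Φ, ∀ t : ℝ, t • β ∈ Φ → t = 1 ∨ t = -1)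
    (hpos : ∀ β : V, β ∈ Φpos ↔
      β ∈ Φ ∧ ∃ c : Fin n → ℝ, (∀ i, 0 ≤ c i) ∧ β = ∑ i, c i • α i)
    (hpm : ∀ β ∈ Φ, β ∈ Φpos ∨ -β ∈ Φpos)
    (Λ : Finset V) (hΛpos : ↑Λ ⊆ (↑Φpos : Set V)) (hA : RootAntichain α ↑Λ)
    (hcard : 2 ≤ Λ.card) (γ : V) (hγ : γ ∈ Λ)
    (hempty : ¬ ∃ v ∈ chamber α, ∀ β ∈ Λ, ⟪v, β⟫ = 1)
    (hsub : ∃ v ∈ chamber α, ∀ β ∈ Λ.erase γ, ⟪v, β⟫ = 1) :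
    ∃ s : V → Bool,
      (chamber α ∩ signChamber (Λ.erase γ) s).Nonempty ∧
      (chamber α ∩ signChamber (Λ.erase γ) s) ∩ {v : V | ⟪v, γ⟫ = 1} = ∅ :=
  stmt16_general α Λ γ hempty hsub
end
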